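/- arXiv:2301.05473 — 2 statements merged into one kernel-verified Lean document; each statement's English description precedes it below -/
import Mathlib

section
/- Under the integro-differential system (ide), the immune response φ(t) = ∫₀¹ ψ(y) ℓ(t,y) dy satisfies limsup_{t→∞} φ(t) ≤ φ̄ := ∫₀¹ ψ(y) ℓ̄(y) dy, where ℓ̄(y) = ω^M(y) ρ⋆ / (k₁ k₂), ω^M(y) = max_{x∈[0,1]} ω(x,y), and ρ⋆ = max_{x∈[0,1]} r(x)/d(x). -/
/-!
Since `r ≤ ρ⋆ d`, every `n(·, x)` has per-capita growth rate at most `d(x) (ρ⋆ - ρ)`, so by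
Grönwall the total population `ρ` decays exponentially while `ρ ≥ ρ⋆ + δ`. Nothing makes `ρ`
continuous, but the crude bound `ρ(t₁) ≤ ρ(t₀) e^{K (t₁ - t₀)}` makes `{ρ ≤ ρ⋆ + δ}` closed under
increasing limits, so once below `ρ⋆ + δ` the population stays there: `limsup ρ ≤ ρ⋆`, hence
`limsup χ(·, y) ≤ ω^M(y) ρ⋆`. Above the level `ω^M ρ⋆ / k₂ + δ` the logistic equation forces `p`
down at a fixed speed, and likewise `ℓ' ≤ p - k₁ ℓ` forces `ℓ` below `ℓ̄ + δ`; the time needed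
depends only on `max p` (resp. `max ℓ`) at one instant, so these bounds hold uniformly in `y`
and integrate against `ψ`.
-/

open Set Filter Real Topology intervalIntegral

theorem le_mul_exp_of_hasDerivAt_le_mul {f f' : ℝ → ℝ} {K a b : ℝ} (hab : a ≤ b)
    (hf : ContinuousOn f (Icc a b)) (hf' : ∀ s ∈ Ioo a b, HasDerivAt f (f' s) s)
    (bound : ∀ s ∈ Ioo a b, f' s ≤ K * f s) : f b ≤ f a * exp (K * (b - a)) := by
  have hanti : AntitoneOn (fun s => f s * exp (K * (b - s))) (Icc a b) := by
    refine antitoneOn_of_hasDerivWithinAt_nonpos (convex_Icc a b)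
      (hf.mul (by fun_prop)) (fun s hs => ?_) (fun s hs => ?_)
      (f' := fun s => (f' s - K * f s) * exp (K * (b - s)))
    · rw [interior_Icc] at hs
      have he : HasDerivAt (fun s => exp (K * (b - s))) (exp (K * (b - s)) * (K * (0 - 1))) s :=
        (((hasDerivAt_const s b).sub (hasDerivAt_id s)).const_mul K).exp
      exact ((hf' s hs).fun_mul he).hasDerivWithinAt.congr_deriv (by ring)
    · rw [interior_Icc] at hs
      exact mul_nonpos_of_nonpos_of_nonneg (by linarith [bound s hs]) (exp_pos _).le
  simpa using hanti (left_mem_Icc.2 hab) (right_mem_Icc.2 hab) hab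

theorem integral_le_integral_mul_exp {u u' : ℝ → ℝ → ℝ} {K a b t₀ t₁ : ℝ} (hab : a ≤ b)
    (ht : t₀ ≤ t₁) (hu₀ : ContinuousOn (u t₀) (Icc a b)) (hu₁ : ContinuousOn (u t₁) (Icc a b))
    (hu : ∀ x ∈ Icc a b, ContinuousOn (fun s => u s x) (Icc t₀ t₁))
    (hu' : ∀ x ∈ Icc a b, ∀ s ∈ Ioo t₀ t₁, HasDerivAt (fun s => u s x) (u' s x) s)
    (bound : ∀ x ∈ Icc a b, ∀ s ∈ Ioo t₀ t₁, u' s x ≤ K * u s x) :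
    ∫ x in a..b, u t₁ x ≤ (∫ x in a..b, u t₀ x) * exp (K * (t₁ - t₀)) := by
  rw [← integral_mul_const]
  exact integral_mono_on hab (hu₁.intervalIntegrable_of_Icc hab)
    ((hu₀.intervalIntegrable_of_Icc hab).mul_const _)
    fun x hx => le_mul_exp_of_hasDerivAt_le_mul ht (hu x hx) (hu' x hx) (bound x hx)

theorem le_of_le_of_mul_exp_bounds {f : ℝ → ℝ} {R c K T t₀ t : ℝ} (hR : 0 ≤ R) (hc : 0 ≤ c)
    (hgrow : ∀ s₀ s₁, T ≤ s₀ → s₀ ≤ s₁ → f s₁ ≤ f s₀ * exp (K * (s₁ - s₀)))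
    (hdecay : ∀ s₀ s₁, T ≤ s₀ → s₀ ≤ s₁ → (∀ s ∈ Ioo s₀ s₁, R ≤ f s) →
      f s₁ ≤ f s₀ * exp (-c * (s₁ - s₀)))
    (hT : T ≤ t₀) (ht₀ : f t₀ ≤ R) (ht : t₀ ≤ t) : f t ≤ R := by
  set S := {s ∈ Icc t₀ t | f s ≤ R}
  have hne : S.Nonempty := ⟨t₀, ⟨le_rfl, ht⟩, ht₀⟩
  have hbdd : BddAbove S := ⟨t, fun s hs => hs.1.2⟩
  set s₁ := sSup S
  have hs₁ : t₀ ≤ s₁ ∧ s₁ ≤ t := ⟨le_csSup hbdd ⟨⟨le_rfl, ht⟩, ht₀⟩, csSup_le hne fun s hs => hs.1.2⟩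
  -- by the growth bound, the last time `s₁` at which `f ≤ R` is itself such a time
  have hfs₁ : f s₁ ≤ R := by
    have hsub : closure S ⊆ {s | f s₁ ≤ R * exp (K * (s₁ - s))} :=
      closure_minimal (fun s hs => (hgrow s s₁ (hT.trans hs.1.1) (le_csSup hbdd hs)).trans
        (mul_le_mul_of_nonneg_right hs.2 (exp_pos _).le))
        (isClosed_le continuous_const (by fun_prop))
    have hmem : s₁ ∈ closure S := csSup_mem_closure hne hbdd
    simpa using hsub hmem
  have habove : ∀ s ∈ Ioo s₁ t, R ≤ f s := fun s hs => by
    by_contra! h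
    exact (le_csSup hbdd ⟨⟨hs₁.1.trans hs.1.le, hs.2.le⟩, h.le⟩).not_gt hs.1
  calc f t ≤ f s₁ * exp (-c * (t - s₁)) := hdecay s₁ t (hT.trans hs₁.1) hs₁.2 habove
    _ ≤ R * exp (-c * (t - s₁)) := mul_le_mul_of_nonneg_right hfs₁ (exp_pos _).le
    _ ≤ R := mul_le_of_le_one_right hR (exp_le_one_iff.2 (by nlinarith [hs₁.2]))

theorem eventually_le_of_mul_exp_bounds {f : ℝ → ℝ} {R c K T : ℝ} (hR : 0 < R) (hc : 0 < c)
    (hgrow : ∀ s₀ s₁, T ≤ s₀ → s₀ ≤ s₁ → f s₁ ≤ f s₀ * exp (K * (s₁ - s₀)))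
    (hdecay : ∀ s₀ s₁, T ≤ s₀ → s₀ ≤ s₁ → (∀ s ∈ Ioo s₀ s₁, R ≤ f s) →
      f s₁ ≤ f s₀ * exp (-c * (s₁ - s₀))) :
    ∀ᶠ t in atTop, f t ≤ R := by
  obtain ⟨t₀, hTt₀, hft₀⟩ : ∃ t₀, T ≤ t₀ ∧ f t₀ ≤ R := by
    by_contra! habove
    have hlim : Tendsto (fun t => f T * exp (-c * (t - T))) atTop (𝓝 0) := by
      simpa [sub_eq_add_neg] using (tendsto_exp_atBot.comp ((tendsto_atTop_add_const_right _ (-T)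
        tendsto_id).const_mul_atTop_of_neg (neg_lt_zero.2 hc))).const_mul (f T)
    obtain ⟨t, hTt, hsmall⟩ :=
      ((eventually_ge_atTop T).and (hlim.eventually (gt_mem_nhds hR))).exists
    exact (hdecay T t le_rfl hTt fun s hs => (habove s hs.1.le).le).not_gt
      (hsmall.trans (habove t hTt))
  filter_upwards [eventually_ge_atTop t₀] with t ht
  exact le_of_le_of_mul_exp_bounds hR.le hc.le hgrow hdecay hTt₀ hft₀ ht

theorem le_of_hasDerivAt_lt_neg {f f' : ℝ → ℝ} {R c T t : ℝ} (hc : 0 ≤ c) (hTt : T ≤ t)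
    (hf : ∀ s ∈ Icc T t, HasDerivAt f (f' s) s) (hf' : ∀ s ∈ Ico T t, R ≤ f s → f' s < -c)
    (hT : f T ≤ R + c * (t - T)) : f t ≤ R := by
  have hB : ∀ s, HasDerivAt (fun s => R + c * (t - s)) (-c) s := fun s => by
    simpa using ((hasDerivAt_id s).const_sub t).const_mul c |>.const_add R
  have key := image_le_of_deriv_right_lt_deriv_boundary
    (fun s hs => (hf s hs).continuousAt.continuousWithinAt)
    (fun s hs => (hf s (Ico_subset_Icc_self hs)).hasDerivWithinAt) hT hB
    (fun s hs hfs => hf' s hs (hfs ▸ le_add_of_nonneg_right (mul_nonneg hc (by linarith [hs.2]))))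
    (right_mem_Icc.2 hTt)
  simpa using key

theorem eventually_forall_le_of_hasDerivAt_lt_neg {f f' : ℝ → ℝ → ℝ} {R : ℝ → ℝ} {s : Set ℝ}
    {c T : ℝ} (hs : IsCompact s) (hc : 0 < c) (hR : ∀ y ∈ s, 0 ≤ R y)
    (hfT : ContinuousOn (f T) s) (hf : ∀ y ∈ s, ∀ t ≥ T, HasDerivAt (fun τ => f τ y) (f' t y) t)
    (hf' : ∀ y ∈ s, ∀ t ≥ T, R y ≤ f t y → f' t y < -c) :
    ∀ᶠ t in atTop, ∀ y ∈ s, f t y ≤ R y := by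
  obtain ⟨M, hM⟩ := hs.bddAbove_image hfT
  filter_upwards [eventually_ge_atTop T, eventually_ge_atTop (T + M / c)] with t hTt htM y hy
  refine le_of_hasDerivAt_lt_neg (f := fun τ => f τ y) hc.le hTt (fun τ hτ => hf y hy τ hτ.1)
    (fun τ hτ => hf' y hy τ hτ.1) ?_
  calc f T y ≤ M := hM ⟨y, hy, rfl⟩
    _ = c * (M / c) := by field_simp
    _ ≤ R y + c * (t - T) := by nlinarith [hR y hy]

/-- `limsup_{t → ∞} sup_{y ∈ s} (u t y - v y) ≤ 0`. -/
def LimsupLEUniformlyOn (u : ℝ → ℝ → ℝ) (v : ℝ → ℝ) (s : Set ℝ) : Prop :=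
  ∀ δ > 0, ∀ᶠ t in atTop, ∀ y ∈ s, u t y ≤ v y + δ

theorem LimsupLEUniformlyOn.of_le_mul {u : ℝ → ℝ → ℝ} {w ρ : ℝ → ℝ} {ρ₀ W : ℝ} {s : Set ℝ}
    (hw : ∀ y ∈ s, 0 ≤ w y) (hW : ∀ y ∈ s, w y ≤ W)
    (hρ : ∀ δ > 0, ∀ᶠ t in atTop, ρ t ≤ ρ₀ + δ)
    (hu : ∀ᶠ t in atTop, ∀ y ∈ s, u t y ≤ w y * ρ t) :
    LimsupLEUniformlyOn u (fun y => w y * ρ₀) s := by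
  intro δ hδ
  filter_upwards [hu, hρ (δ / (|W| + 1)) (by positivity)] with t hut hρt y hy
  have hwW : w y ≤ |W| + 1 := (hW y hy).trans (by linarith [le_abs_self W])
  calc u t y ≤ w y * (ρ₀ + δ / (|W| + 1)) :=
        (hut y hy).trans (mul_le_mul_of_nonneg_left hρt (hw y hy))
    _ ≤ w y * ρ₀ + (|W| + 1) * (δ / (|W| + 1)) := by
        rw [mul_add]; gcongr
    _ = w y * ρ₀ + δ := by field_simp

theorem LimsupLEUniformlyOn.of_logistic {p χ : ℝ → ℝ → ℝ} {X : ℝ → ℝ} {k : ℝ} {s : Set ℝ}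
    (hs : IsCompact s) (hk : 0 < k) (hX : ∀ y ∈ s, 0 ≤ X y)
    (hp : ∀ y ∈ s, ∀ t > 0, HasDerivAt (fun τ => p τ y) (χ t y * p t y - k * p t y ^ 2) t)
    (hpc : ∀ t ≥ 0, ContinuousOn (p t) s) (hχ : LimsupLEUniformlyOn χ X s) :
    LimsupLEUniformlyOn p (fun y => X y / k) s := by
  intro δ hδ
  obtain ⟨T, hT⟩ := eventually_atTop.1 (hχ (k * δ / 2) (by positivity))
  refine eventually_forall_le_of_hasDerivAt_lt_neg (T := max T 1) (c := k * δ ^ 2 / 4) hs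
    (by positivity) (fun y hy => by have := hX y hy; positivity) (hpc _ (by positivity))
    (fun y hy t ht => hp y hy t (by linarith [le_max_right T 1])) fun y hy t ht hpt => ?_
  have hχt := hT t (le_of_max_le_left ht) y hy
  have hkp : X y + k * δ ≤ k * p t y := by
    have := mul_le_mul_of_nonneg_left hpt hk.le
    rwa [mul_add, mul_div_cancel₀ _ hk.ne'] at this
  have hpδ : δ ≤ p t y := by
    have : 0 ≤ X y / k := div_nonneg (hX y hy) hk.le
    linarith
  calc χ t y * p t y - k * p t y ^ 2 = p t y * (χ t y - k * p t y) := by ring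
    _ ≤ p t y * (-(k * δ / 2)) := mul_le_mul_of_nonneg_left (by linarith) (by linarith)
    _ ≤ δ * (-(k * δ / 2)) := mul_le_mul_of_nonpos_right hpδ (by nlinarith [mul_pos hk hδ])
    _ < -(k * δ ^ 2 / 4) := by nlinarith [mul_pos hk (mul_pos hδ hδ)]

theorem LimsupLEUniformlyOn.of_relaxation {l l' p : ℝ → ℝ → ℝ} {P : ℝ → ℝ} {k : ℝ} {s : Set ℝ}
    (hs : IsCompact s) (hk : 0 < k) (hP : ∀ y ∈ s, 0 ≤ P y)
    (hl : ∀ y ∈ s, ∀ t > 0, HasDerivAt (fun τ => l τ y) (l' t y) t)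
    (hl' : ∀ y ∈ s, ∀ t > 0, l' t y ≤ p t y - k * l t y)
    (hlc : ∀ t ≥ 0, ContinuousOn (l t) s) (hp : LimsupLEUniformlyOn p P s) :
    LimsupLEUniformlyOn l (fun y => P y / k) s := by
  intro δ hδ
  obtain ⟨T, hT⟩ := eventually_atTop.1 (hp (k * δ / 2) (by positivity))
  refine eventually_forall_le_of_hasDerivAt_lt_neg (T := max T 1) (c := k * δ / 4) hs
    (by positivity) (fun y hy => by have := hP y hy; positivity) (hlc _ (by positivity))
    (fun y hy t ht => hl y hy t (by linarith [le_max_right T 1])) fun y hy t ht hlt => ?_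
  have hpt := hT t (le_of_max_le_left ht) y hy
  have hkl : P y + k * δ ≤ k * l t y := by
    have := mul_le_mul_of_nonneg_left hlt hk.le
    rwa [mul_add, mul_div_cancel₀ _ hk.ne'] at this
  linarith [hl' y hy t (by linarith [le_max_right T 1]), mul_pos hk hδ]

theorem LimsupLEUniformlyOn.eventually_integral_mul_le {l : ℝ → ℝ → ℝ} {L ψ : ℝ → ℝ} {a b : ℝ}
    (hab : a ≤ b) (hl : LimsupLEUniformlyOn l L (Icc a b)) (hψ : ContinuousOn ψ (Icc a b))
    (hψ₀ : ∀ y ∈ Icc a b, 0 ≤ ψ y) (hL : ContinuousOn L (Icc a b))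
    (hlc : ∀ᶠ t in atTop, ContinuousOn (l t) (Icc a b)) :
    ∀ ε > 0, ∀ᶠ t in atTop, ∫ y in a..b, ψ y * l t y ≤ (∫ y in a..b, ψ y * L y) + ε := by
  intro ε hε
  set S := ∫ y in a..b, ψ y
  have hS : 0 ≤ S := integral_nonneg (μ := MeasureTheory.volume) hab hψ₀
  filter_upwards [hl (ε / (S + 1)) (by positivity), hlc] with t hlt hlct
  have hψL : IntervalIntegrable (fun y => ψ y * L y) MeasureTheory.volume a b :=
    (hψ.mul hL).intervalIntegrable_of_Icc hab
  calc ∫ y in a..b, ψ y * l t y ≤ ∫ y in a..b, (ψ y * L y + ψ y * (ε / (S + 1))) := by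
        refine integral_mono_on hab ((hψ.mul hlct).intervalIntegrable_of_Icc hab)
          (hψL.add ((hψ.intervalIntegrable_of_Icc hab).mul_const _)) fun y hy => ?_
        rw [← mul_add]
        exact mul_le_mul_of_nonneg_left (hlt y hy) (hψ₀ y hy)
    _ = (∫ y in a..b, ψ y * L y) + S * (ε / (S + 1)) := by
        rw [integral_add hψL ((hψ.intervalIntegrable_of_Icc hab).mul_const _), integral_mul_const]
    _ ≤ (∫ y in a..b, ψ y * L y) + ε := by
        gcongr
        rw [mul_div_assoc']
        exact div_le_of_le_mul₀ (by positivity) hε.le (by nlinarith)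

theorem continuousOn_of_isGreatest_image {g : ℝ → ℝ → ℝ} {G : ℝ → ℝ} {a b c d : ℝ}
    (hab : a ≤ b) (hcd : c ≤ d)
    (hg : ContinuousOn (fun q : ℝ × ℝ => g q.1 q.2) (Icc a b ×ˢ Icc c d))
    (hG : ∀ y ∈ Icc c d, IsGreatest ((fun x => g x y) '' Icc a b) (G y)) :
    ContinuousOn G (Icc c d) := by
  -- `IsCompact.continuous_sSup` needs continuity on the whole plane: clamp both arguments
  set h : ℝ → ℝ → ℝ := fun y x => g (projIcc a b hab x) (projIcc c d hcd y)
  have hh : Continuous ↿h :=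
    hg.comp_continuous (f := fun q : ℝ × ℝ => ((projIcc a b hab q.2 : ℝ), (projIcc c d hcd q.1 : ℝ)))
      (by fun_prop) fun q => ⟨(projIcc a b hab q.2).2, (projIcc c d hcd q.1).2⟩
  refine ((isCompact_Icc (a := a) (b := b)).continuous_sSup hh).continuousOn.congr fun y hy => ?_
  rw [← (hG y hy).csSup_eq]
  congr 1
  refine image_congr fun x hx => ?_
  simp [h, projIcc_of_mem hab hx, projIcc_of_mem hcd hy]

theorem integral_mul_le_mul_integral {f g : ℝ → ℝ} {M a b : ℝ} (hab : a ≤ b)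
    (hf : ContinuousOn f (Icc a b)) (hg : ContinuousOn g (Icc a b))
    (hg₀ : ∀ x ∈ Icc a b, 0 ≤ g x) (hfM : ∀ x ∈ Icc a b, f x ≤ M) :
    ∫ x in a..b, f x * g x ≤ M * ∫ x in a..b, g x := by
  rw [← integral_const_mul]
  exact integral_mono_on hab ((hf.mul hg).intervalIntegrable_of_Icc hab)
    ((hg.intervalIntegrable_of_Icc hab).const_mul M)
    fun x hx => mul_le_mul_of_nonneg_right (hfM x hx) (hg₀ x hx)

theorem eventually_le_add_of_rate_le {n g : ℝ → ℝ → ℝ} {r d ρ : ℝ → ℝ} {ρ₀ a b : ℝ}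
    (hab : a ≤ b) (hρ : ∀ t, ρ t = ∫ x in a..b, n t x)
    (hn : ∀ x ∈ Icc a b, ∀ t > 0, HasDerivAt (fun s => n s x) (g t x * n t x) t)
    (hg : ∀ x ∈ Icc a b, ∀ t > 0, g t x ≤ r x - d x * ρ t)
    (hn₀ : ∀ t ≥ 0, ∀ x ∈ Icc a b, 0 ≤ n t x) (hnc : ∀ t ≥ 0, ContinuousOn (n t) (Icc a b))
    (hdc : ContinuousOn d (Icc a b)) (hd : ∀ x ∈ Icc a b, 0 < d x)
    (hrd : ∀ x ∈ Icc a b, r x ≤ ρ₀ * d x) (hρ₀ : 0 ≤ ρ₀) :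
    ∀ δ > 0, ∀ᶠ t in atTop, ρ t ≤ ρ₀ + δ := by
  intro δ hδ
  obtain ⟨D, hD⟩ := isCompact_Icc.bddAbove_image hdc
  obtain ⟨xd, hxd, hdmin⟩ := isCompact_Icc.exists_isMinOn (nonempty_Icc.2 hab) hdc
  have hρnn : ∀ t > 0, 0 ≤ ρ t := fun t ht => (hρ t).symm ▸ integral_nonneg hab (hn₀ t ht.le)
  have hρ_exp : ∀ κ t₀ t₁, 1 ≤ t₀ → t₀ ≤ t₁ → (∀ s ∈ Ioo t₀ t₁, ∀ x ∈ Icc a b, g s x ≤ κ) →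
      ρ t₁ ≤ ρ t₀ * exp (κ * (t₁ - t₀)) := by
    intro κ t₀ t₁ h₀ h₀₁ hκ
    rw [hρ, hρ]
    exact integral_le_integral_mul_exp hab h₀₁ (hnc _ (by linarith)) (hnc _ (by linarith))
      (fun x hx s hs => (hn x hx s (by linarith [hs.1])).continuousAt.continuousWithinAt)
      (fun x hx s hs => hn x hx s (by linarith [hs.1]))
      fun x hx s hs => mul_le_mul_of_nonneg_right (hκ s hs x hx) (hn₀ s (by linarith [hs.1]) x hx)
  refine eventually_le_of_mul_exp_bounds (T := 1) (K := ρ₀ * D) (c := d xd * δ) (by positivity)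
    (mul_pos (hd xd hxd) hδ) (fun t₀ t₁ h₀ h₀₁ => hρ_exp _ t₀ t₁ h₀ h₀₁ fun s hs x hx => ?_)
    (fun t₀ t₁ h₀ h₀₁ habove => hρ_exp _ t₀ t₁ h₀ h₀₁ fun s hs x hx => ?_)
  · have hs₀ : 0 < s := by linarith [hs.1]
    calc g s x ≤ r x - d x * ρ s := hg x hx s hs₀
      _ ≤ ρ₀ * d x := by nlinarith [hrd x hx, hd x hx, hρnn s hs₀]
      _ ≤ ρ₀ * D := mul_le_mul_of_nonneg_left (hD ⟨x, hx, rfl⟩) hρ₀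
  · have hs₀ : 0 < s := by linarith [hs.1]
    calc g s x ≤ r x - d x * ρ s := hg x hx s hs₀
      _ ≤ ρ₀ * d x - d x * (ρ₀ + δ) := by nlinarith [hrd x hx, hd x hx, habove s hs]
      _ = -(d x * δ) := by ring
      _ ≤ -(d xd * δ) := neg_le_neg (mul_le_mul_of_nonneg_right (hdmin hx) hδ.le)

theorem immune_response_limsup_bound_general
    (n l p : ℝ → ℝ → ℝ) (r d μ ψ ν : ℝ → ℝ) (ω : ℝ → ℝ → ℝ)
    (k₁ k₂ : ℝ) (ρ φ : ℝ → ℝ) (χ : ℝ → ℝ → ℝ) (ρstar : ℝ) (ωM : ℝ → ℝ)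
    (hk₁ : 0 < k₁) (hk₂ : 0 < k₂)
    (hdc : ContinuousOn d (Set.Icc 0 1))
    (hψc : ContinuousOn ψ (Set.Icc 0 1))
    (hωc : ContinuousOn (fun q : ℝ × ℝ => ω q.1 q.2) (Set.Icc 0 1 ×ˢ Set.Icc 0 1))
    (hrpos : ∀ x ∈ Set.Icc (0:ℝ) 1, 0 < r x)
    (hdpos : ∀ x ∈ Set.Icc (0:ℝ) 1, 0 < d x)
    (hμpos : ∀ x ∈ Set.Icc (0:ℝ) 1, 0 < μ x)
    (hψpos : ∀ y ∈ Set.Icc (0:ℝ) 1, 0 < ψ y)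
    (hνpos : ∀ y ∈ Set.Icc (0:ℝ) 1, 0 < ν y)
    (hωpos : ∀ x ∈ Set.Icc (0:ℝ) 1, ∀ y ∈ Set.Icc (0:ℝ) 1, 0 < ω x y)
    (hρdef : ∀ t, ρ t = ∫ x in (0:ℝ)..1, n t x)
    (hφdef : ∀ t, φ t = ∫ y in (0:ℝ)..1, ψ y * l t y)
    (hχdef : ∀ t y, χ t y = ∫ x in (0:ℝ)..1, ω x y * n t x)
    (hnode : ∀ x ∈ Set.Icc (0:ℝ) 1, ∀ t > (0:ℝ),
      HasDerivAt (fun s => n s x) ((r x - d x * ρ t - μ x * φ t) * n t x) t)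
    (hlode : ∀ y ∈ Set.Icc (0:ℝ) 1, ∀ t > (0:ℝ),
      HasDerivAt (fun s => l s y) (p t y - (ν y * ρ t + k₁) * l t y) t)
    (hpode : ∀ y ∈ Set.Icc (0:ℝ) 1, ∀ t > (0:ℝ),
      HasDerivAt (fun s => p s y) (χ t y * p t y - k₂ * (p t y) ^ 2) t)
    (hnnn : ∀ t ≥ (0:ℝ), ∀ x ∈ Set.Icc (0:ℝ) 1, 0 ≤ n t x)
    (hlnn : ∀ t ≥ (0:ℝ), ∀ y ∈ Set.Icc (0:ℝ) 1, 0 ≤ l t y)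
    (hncont : ∀ t ≥ (0:ℝ), ContinuousOn (n t) (Set.Icc 0 1))
    (hlcont : ∀ t ≥ (0:ℝ), ContinuousOn (l t) (Set.Icc 0 1))
    (hpcont : ∀ t ≥ (0:ℝ), ContinuousOn (p t) (Set.Icc 0 1))
    (hρstar : IsGreatest ((fun x => r x / d x) '' Set.Icc (0:ℝ) 1) ρstar)
    (hωM : ∀ y ∈ Set.Icc (0:ℝ) 1, IsGreatest ((fun x => ω x y) '' Set.Icc (0:ℝ) 1) (ωM y))
    (φbar : ℝ)
    (hφbar : φbar = ∫ y in (0:ℝ)..1, ψ y * (ωM y * ρstar / (k₁ * k₂))) :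
    ∀ ε > 0, ∀ᶠ t in Filter.atTop, φ t ≤ φbar + ε := by
  have h01 : (0 : ℝ) ≤ 1 := zero_le_one
  have hρ₀ : ∀ t ≥ 0, 0 ≤ ρ t := fun t ht => (hρdef t).symm ▸ integral_nonneg h01 (hnnn t ht)
  have hφ₀ : ∀ t ≥ 0, 0 ≤ φ t := fun t ht => (hφdef t).symm ▸
    integral_nonneg h01 fun y hy => mul_nonneg (hψpos y hy).le (hlnn t ht y hy)
  have hρstar₀ : 0 ≤ ρstar :=
    forall_mem_image.2 (fun x hx => (div_pos (hrpos x hx) (hdpos x hx)).le) _ hρstar.1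
  have hωM₀ : ∀ y ∈ Icc (0 : ℝ) 1, 0 ≤ ωM y := fun y hy =>
    forall_mem_image.2 (fun x hx => (hωpos x hx y hy).le) _ (hωM y hy).1
  have hωMc := continuousOn_of_isGreatest_image h01 h01 hωc hωM
  obtain ⟨W, hW⟩ := isCompact_Icc.bddAbove_image hωMc
  have hρ := eventually_le_add_of_rate_le h01 hρdef hnode
    (fun x hx t ht => by nlinarith [mul_nonneg (hμpos x hx).le (hφ₀ t ht.le)]) hnnn hncont hdc hdpos
    (fun x hx => (div_le_iff₀ (hdpos x hx)).1 (hρstar.2 ⟨x, hx, rfl⟩)) hρstar₀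
  have hχ : LimsupLEUniformlyOn χ (fun y => ωM y * ρstar) (Icc 0 1) :=
    .of_le_mul hωM₀ (fun y hy => hW ⟨y, hy, rfl⟩) hρ <| by
      filter_upwards [eventually_ge_atTop 0] with t ht y hy
      rw [hχdef, hρdef]
      exact integral_mul_le_mul_integral h01
        (hωc.comp (continuous_id.prodMk continuous_const).continuousOn fun x hx => ⟨hx, hy⟩)
        (hncont t ht) (hnnn t ht) fun x hx => (hωM y hy).2 ⟨x, hx, rfl⟩
  have hp := hχ.of_logistic isCompact_Icc hk₂ (fun y hy => mul_nonneg (hωM₀ y hy) hρstar₀)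
    hpode hpcont
  have hl := hp.of_relaxation isCompact_Icc hk₁
    (fun y hy => div_nonneg (mul_nonneg (hωM₀ y hy) hρstar₀) hk₂.le) hlode
    (fun y hy t ht => by
      nlinarith [mul_nonneg (mul_nonneg (hνpos y hy).le (hρ₀ t ht.le)) (hlnn t ht.le y hy)])
    hlcont
  intro ε hε
  filter_upwards [hl.eventually_integral_mul_le h01 hψc (fun y hy => (hψpos y hy).le)
    (((hωMc.mul continuousOn_const).div_const _).div_const _)
    ((eventually_ge_atTop 0).mono hlcont) ε hε] with t ht
  rw [hφdef, hφbar]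
  simpa only [div_div, mul_comm k₂ k₁] using ht

/-- limsup φ(t) ≤ φ̄ = ∫ ψ(y) ℓ̄(y) dy with ℓ̄(y) = ω^M(y) ρ⋆/(k₁k₂). -/
theorem immune_response_limsup_bound
    (n l p : ℝ → ℝ → ℝ) (r d μ ψ ν : ℝ → ℝ) (ω : ℝ → ℝ → ℝ)
    (k₁ k₂ : ℝ) (ρ φ : ℝ → ℝ) (χ : ℝ → ℝ → ℝ) (ρstar : ℝ) (ωM : ℝ → ℝ)
    (hk₁ : 0 < k₁) (hk₂ : 0 < k₂)
    (hrc : ContinuousOn r (Set.Icc 0 1)) (hdc : ContinuousOn d (Set.Icc 0 1))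
    (hμc : ContinuousOn μ (Set.Icc 0 1)) (hψc : ContinuousOn ψ (Set.Icc 0 1))
    (hνc : ContinuousOn ν (Set.Icc 0 1))
    (hωc : ContinuousOn (fun q : ℝ × ℝ => ω q.1 q.2) (Set.Icc 0 1 ×ˢ Set.Icc 0 1))
    (hrpos : ∀ x ∈ Set.Icc (0:ℝ) 1, 0 < r x)
    (hdpos : ∀ x ∈ Set.Icc (0:ℝ) 1, 0 < d x)
    (hμpos : ∀ x ∈ Set.Icc (0:ℝ) 1, 0 < μ x)
    (hψpos : ∀ y ∈ Set.Icc (0:ℝ) 1, 0 < ψ y)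
    (hνpos : ∀ y ∈ Set.Icc (0:ℝ) 1, 0 < ν y)
    (hωpos : ∀ x ∈ Set.Icc (0:ℝ) 1, ∀ y ∈ Set.Icc (0:ℝ) 1, 0 < ω x y)
    (hρdef : ∀ t, ρ t = ∫ x in (0:ℝ)..1, n t x)
    (hφdef : ∀ t, φ t = ∫ y in (0:ℝ)..1, ψ y * l t y)
    (hχdef : ∀ t y, χ t y = ∫ x in (0:ℝ)..1, ω x y * n t x)
    (hnode : ∀ x ∈ Set.Icc (0:ℝ) 1, ∀ t > (0:ℝ),
      HasDerivAt (fun s => n s x) ((r x - d x * ρ t - μ x * φ t) * n t x) t)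
    (hlode : ∀ y ∈ Set.Icc (0:ℝ) 1, ∀ t > (0:ℝ),
      HasDerivAt (fun s => l s y) (p t y - (ν y * ρ t + k₁) * l t y) t)
    (hpode : ∀ y ∈ Set.Icc (0:ℝ) 1, ∀ t > (0:ℝ),
      HasDerivAt (fun s => p s y) (χ t y * p t y - k₂ * (p t y) ^ 2) t)
    (hnnn : ∀ t ≥ (0:ℝ), ∀ x ∈ Set.Icc (0:ℝ) 1, 0 ≤ n t x)
    (hlnn : ∀ t ≥ (0:ℝ), ∀ y ∈ Set.Icc (0:ℝ) 1, 0 ≤ l t y)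
    (hpnn : ∀ t ≥ (0:ℝ), ∀ y ∈ Set.Icc (0:ℝ) 1, 0 ≤ p t y)
    (hncont : ∀ t ≥ (0:ℝ), ContinuousOn (n t) (Set.Icc 0 1))
    (hlcont : ∀ t ≥ (0:ℝ), ContinuousOn (l t) (Set.Icc 0 1))
    (hpcont : ∀ t ≥ (0:ℝ), ContinuousOn (p t) (Set.Icc 0 1))
    (hρstar : IsGreatest ((fun x => r x / d x) '' Set.Icc (0:ℝ) 1) ρstar)
    (hωM : ∀ y ∈ Set.Icc (0:ℝ) 1, IsGreatest ((fun x => ω x y) '' Set.Icc (0:ℝ) 1) (ωM y))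
    (φbar : ℝ)
    (hφbar : φbar = ∫ y in (0:ℝ)..1, ψ y * (ωM y * ρstar / (k₁ * k₂))) :
    ∀ ε > 0, ∀ᶠ t in Filter.atTop, φ t ≤ φbar + ε :=
  immune_response_limsup_bound_general n l p r d μ ψ ν ω k₁ k₂ ρ φ χ ρstar ωM hk₁ hk₂ hdc hψc hωc
    hrpos hdpos hμpos hψpos hνpos hωpos hρdef hφdef hχdef hnode hlode hpode hnnn hlnn hncont hlcont
    hpcont hρstar hωM φbar hφbar
end

section
/- Non-autonomous linear ODE lemma: let A, B : [0,∞) → ℝ be continuous with A(t) → Ā and B(t) → B̄ as t → ∞, where B̄ > 0 and A is nonnegative, and let L : [0,∞) → [0,∞) be continuously differentiable and solve L'(t) = A(t) − B(t) L(t). Then L(t) → Ā/B̄ as t → ∞. -/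
/-!
Once `A` and `B` are within `δ` of their limits, the nonnegativity of `L` turns the equation
into the two differential inequalities `(Ā - δ) - (B̄ + δ) L ≤ L' ≤ (Ā + δ) - (B̄ - δ) L`.
By Grönwall's inequality each of them traps `L` asymptotically on its side of the equilibrium
of the corresponding autonomous equation, and these equilibria tend to `Ā / B̄` as `δ → 0`.
-/

open Filter Set Topology

theorem tendsto_gronwallBound_of_neg {δ K ε : ℝ} (hK : K < 0) :
    Tendsto (gronwallBound δ K ε) atTop (𝓝 (-(ε / K))) := by
  have hexp : Tendsto (fun x => Real.exp (K * x)) atTop (𝓝 0) :=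
    Real.tendsto_exp_atBot.comp (tendsto_id.const_mul_atTop_of_neg hK)
  rw [gronwallBound_of_K_ne_0 hK.ne]
  convert (hexp.const_mul δ).add ((hexp.sub_const 1).const_mul (ε / K)) using 2
  ring

theorem eventually_lt_of_hasDerivAt_of_le_sub_mul {L D : ℝ → ℝ} {a b c : ℝ} (hb : 0 < b)
    (hL : ∀ᶠ t in atTop, HasDerivAt L (D t) t) (hD : ∀ᶠ t in atTop, D t ≤ a - b * L t)
    (hc : a / b < c) : ∀ᶠ t in atTop, L t < c := by
  obtain ⟨T, hT⟩ := eventually_atTop.1 (hL.and hD)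
  have hbound : ∀ t ≥ T, L t ≤ gronwallBound (L T) (-b) a (t - T) := fun t ht =>
    le_gronwallBound_of_liminf_deriv_right_le (f' := D)
      (fun x hx => (hT x hx.1).1.continuousAt.continuousWithinAt)
      (fun x hx _ hr => (hT x hx.1).1.hasDerivWithinAt.liminf_right_slope_le hr) le_rfl
      (fun x hx => by linarith [(hT x hx.1).2]) t ⟨ht, le_rfl⟩
  have hlim : Tendsto (fun t => gronwallBound (L T) (-b) a (t - T)) atTop (𝓝 (a / b)) := by
    simpa [div_neg, Function.comp_def, ← sub_eq_add_neg] using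
      (tendsto_gronwallBound_of_neg (neg_lt_zero.2 hb)).comp
        (tendsto_atTop_add_const_right _ (-T) tendsto_id)
  filter_upwards [hlim.eventually_lt_const hc, eventually_ge_atTop T] with t hlt ht
  exact (hbound t ht).trans_lt hlt

theorem eventually_gt_of_hasDerivAt_of_sub_mul_le {L D : ℝ → ℝ} {a b c : ℝ} (hb : 0 < b)
    (hL : ∀ᶠ t in atTop, HasDerivAt L (D t) t) (hD : ∀ᶠ t in atTop, a - b * L t ≤ D t)
    (hc : c < a / b) : ∀ᶠ t in atTop, c < L t := by
  have hneg := eventually_lt_of_hasDerivAt_of_le_sub_mul (L := -L) (D := -D) (a := -a) (c := -c) hb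
    (hL.mono fun t h => h.neg) (hD.mono fun t h => by simp only [Pi.neg_apply]; linarith)
    (by rw [neg_div]; linarith)
  exact hneg.mono fun t h => by simpa using h

theorem exists_gt_lt_div_lt {a₀ b₀ c : ℝ} (hb₀ : 0 < b₀) (hc : a₀ / b₀ < c) :
    ∃ a b, a₀ < a ∧ 0 < b ∧ b < b₀ ∧ a / b < c := by
  have hdiv : ∀ᶠ p in 𝓝[>] a₀ ×ˢ 𝓝[<] b₀, p.1 / p.2 < c :=
    ((continuousAt_fst.div continuousAt_snd hb₀.ne').eventually (gt_mem_nhds hc)).filter_mono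
      (by rw [nhds_prod_eq]; exact prod_mono nhdsWithin_le_nhds nhdsWithin_le_nhds)
  have hpos : ∀ᶠ b in 𝓝[<] b₀, 0 < b := eventually_nhdsWithin_of_eventually_nhds (lt_mem_nhds hb₀)
  obtain ⟨⟨a, b⟩, hab, ha, hb, hb0⟩ :=
    (hdiv.and (eventually_mem_nhdsWithin.prod_mk (eventually_mem_nhdsWithin.and hpos))).exists
  exact ⟨a, b, ha, hb0, hb, hab⟩

theorem exists_lt_gt_lt_div {a₀ b₀ c : ℝ} (hb₀ : 0 < b₀) (hc : c < a₀ / b₀) :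
    ∃ a b, a < a₀ ∧ b₀ < b ∧ c < a / b := by
  have hdiv : ∀ᶠ p in 𝓝[<] a₀ ×ˢ 𝓝[>] b₀, c < p.1 / p.2 :=
    ((continuousAt_fst.div continuousAt_snd hb₀.ne').eventually (lt_mem_nhds hc)).filter_mono
      (by rw [nhds_prod_eq]; exact prod_mono nhdsWithin_le_nhds nhdsWithin_le_nhds)
  obtain ⟨⟨a, b⟩, hab, ha, hb⟩ :=
    (hdiv.and (eventually_mem_nhdsWithin.prod_mk eventually_mem_nhdsWithin)).exists
  exact ⟨a, b, ha, hb, hab⟩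

theorem nonautonomous_linear_limit_general
    (A B L : ℝ → ℝ) (Abar Bbar : ℝ)
    (hAlim : Filter.Tendsto A Filter.atTop (nhds Abar))
    (hBlim : Filter.Tendsto B Filter.atTop (nhds Bbar))
    (hBbar : 0 < Bbar)
    (hLnn : ∀ t ≥ (0:ℝ), 0 ≤ L t)
    (hode : ∀ t ≥ (0:ℝ), HasDerivAt L (A t - B t * L t) t) :
    Filter.Tendsto L Filter.atTop (nhds (Abar / Bbar)) := by
  have hL : ∀ᶠ t in atTop, HasDerivAt L (A t - B t * L t) t := eventually_atTop.2 ⟨0, hode⟩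
  have hL_nonneg : ∀ᶠ t in atTop, 0 ≤ L t := eventually_atTop.2 ⟨0, hLnn⟩
  rw [tendsto_order]
  refine ⟨fun c hc => ?_, fun c hc => ?_⟩
  · obtain ⟨a, b, ha, hb, hab⟩ := exists_lt_gt_lt_div hBbar hc
    refine eventually_gt_of_hasDerivAt_of_sub_mul_le (hBbar.trans hb) hL ?_ hab
    filter_upwards [hAlim.eventually_const_lt ha, hBlim.eventually_lt_const hb, hL_nonneg]
      with t hAt hBt hLt
    exact sub_le_sub hAt.le (mul_le_mul_of_nonneg_right hBt.le hLt)
  · obtain ⟨a, b, ha, hb0, hb, hab⟩ := exists_gt_lt_div_lt hBbar hc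
    refine eventually_lt_of_hasDerivAt_of_le_sub_mul hb0 hL ?_ hab
    filter_upwards [hAlim.eventually_lt_const ha, hBlim.eventually_const_lt hb, hL_nonneg]
      with t hAt hBt hLt
    exact sub_le_sub hAt.le (mul_le_mul_of_nonneg_right hBt.le hLt)

/-- Non-autonomous linear ODE lemma: if A(t) → Ā, B(t) → B̄ > 0, A ≥ 0, then the
nonnegative solution of L' = A(t) − B(t) L converges to Ā/B̄. -/
theorem nonautonomous_linear_limit
    (A B L : ℝ → ℝ) (Abar Bbar : ℝ)
    (hAc : ContinuousOn A (Set.Ici 0)) (hBc : ContinuousOn B (Set.Ici 0))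
    (hAlim : Filter.Tendsto A Filter.atTop (nhds Abar))
    (hBlim : Filter.Tendsto B Filter.atTop (nhds Bbar))
    (hBbar : 0 < Bbar)
    (hAnn : ∀ t ≥ (0:ℝ), 0 ≤ A t)
    (hLnn : ∀ t ≥ (0:ℝ), 0 ≤ L t)
    (hode : ∀ t ≥ (0:ℝ), HasDerivAt L (A t - B t * L t) t) :
    Filter.Tendsto L Filter.atTop (nhds (Abar / Bbar)) :=
  nonautonomous_linear_limit_general A B L Abar Bbar hAlim hBlim hBbar hLnn hode
end
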